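/- For all F = F₀ + F_v and G = G₀ + G_v in ℍ_ℂ, the determinant of the Sylvester operator S_{F,G}, regarded as a ℂ-linear endomorphism of the 4-dimensional ℂ-vector space ℍ_ℂ, equals (F₀ + G₀)⁴ + 2(F₀ + G₀)²(F_v^s + G_v^s) + (F_v^s − G_v^s)². -/

import Mathlib

/-!
In the basis `1, i, j, k` the matrices of `z ↦ Fz` and `z ↦ zG` agree in shape except that
their lower-right `3 × 3` blocks carry opposite skew-symmetric parts (because `ij = -ji`).
Expanding the determinant of their sum gives `(c² + p + q)² - 4pq` with `c = F₀ + G₀`,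
`p = F_v^s`, `q = G_v^s`, which is the stated polynomial.
-/

open Quaternion

instance : SMulCommClass ℂ (Quaternion ℂ) (Quaternion ℂ) :=
  @Algebra.to_smulCommClass ℂ (Quaternion ℂ) _ _ _

instance : IsScalarTower ℂ (Quaternion ℂ) (Quaternion ℂ) :=
  @IsScalarTower.right ℂ (Quaternion ℂ) _ _ _

/-- The Sylvester operator `S_{F,G}(z) = Fz + zG` as a `ℂ`-linear endomorphism of the
complex quaternions. -/
noncomputable def sylvesterOp (F G : Quaternion ℂ) : Quaternion ℂ →ₗ[ℂ] Quaternion ℂ :=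
  LinearMap.mulLeft ℂ F + LinearMap.mulRight ℂ G

namespace Quaternion

variable {R : Type*} [CommRing R]

noncomputable def basisOneIJK : Module.Basis (Fin 4) R ℍ[R] :=
  QuaternionAlgebra.basisOneIJK (-1) 0 (-1)

@[simp]
theorem coe_basisOneIJK_repr (q : ℍ[R]) :
    basisOneIJK.repr q = ![q.re, q.imI, q.imJ, q.imK] :=
  rfl

@[simp]
theorem re_basisOneIJK (j : Fin 4) : (basisOneIJK j : ℍ[R]).re = Finsupp.single j 1 0 :=
  congr($(basisOneIJK.repr_self j) 0)

@[simp]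
theorem imI_basisOneIJK (j : Fin 4) : (basisOneIJK j : ℍ[R]).imI = Finsupp.single j 1 1 :=
  congr($(basisOneIJK.repr_self j) 1)

@[simp]
theorem imJ_basisOneIJK (j : Fin 4) : (basisOneIJK j : ℍ[R]).imJ = Finsupp.single j 1 2 :=
  congr($(basisOneIJK.repr_self j) 2)

@[simp]
theorem imK_basisOneIJK (j : Fin 4) : (basisOneIJK j : ℍ[R]).imK = Finsupp.single j 1 3 :=
  congr($(basisOneIJK.repr_self j) 3)

theorem toMatrix_mulLeft (F : ℍ[R]) :
    LinearMap.toMatrix basisOneIJK basisOneIJK (LinearMap.mulLeft R F) =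
      !![F.re, -F.imI, -F.imJ, -F.imK;
         F.imI, F.re, -F.imK, F.imJ;
         F.imJ, F.imK, F.re, -F.imI;
         F.imK, -F.imJ, F.imI, F.re] := by
  ext i j
  fin_cases i <;> fin_cases j <;> simp [LinearMap.toMatrix_apply]

theorem toMatrix_mulRight (G : ℍ[R]) :
    LinearMap.toMatrix basisOneIJK basisOneIJK (LinearMap.mulRight R G) =
      !![G.re, -G.imI, -G.imJ, -G.imK;
         G.imI, G.re, G.imK, -G.imJ;
         G.imJ, -G.imK, G.re, G.imI;
         G.imK, G.imJ, -G.imI, G.re] := by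
  ext i j
  fin_cases i <;> fin_cases j <;> simp [LinearMap.toMatrix_apply]

theorem normSq_im (a : ℍ[R]) : normSq a.im = a.imI ^ 2 + a.imJ ^ 2 + a.imK ^ 2 := by
  simp [normSq_def']

theorem det_mulLeft_add_mulRight (F G : ℍ[R]) :
    LinearMap.det (LinearMap.mulLeft R F + LinearMap.mulRight R G) =
      (F.re + G.re) ^ 4 + 2 * (F.re + G.re) ^ 2 * (normSq F.im + normSq G.im) +
        (normSq F.im - normSq G.im) ^ 2 := by
  rw [← LinearMap.det_toMatrix basisOneIJK, map_add, toMatrix_mulLeft, toMatrix_mulRight,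
    normSq_im, normSq_im, Matrix.det_succ_row_zero]
  simp [Fin.sum_univ_succ, Matrix.det_fin_three, Fin.succAbove_of_lt_succ,
    Fin.succAbove_of_succ_le]
  ring

end Quaternion

/-- The determinant of the Sylvester operator `S_{F,G}` equals
`(F₀+G₀)⁴ + 2(F₀+G₀)²(F_v^s + G_v^s) + (F_v^s − G_v^s)²`. -/
theorem sylvester_det (F G : Quaternion ℂ) :
    LinearMap.det (sylvesterOp F G) =
      (F.re + G.re) ^ 4 + 2 * (F.re + G.re) ^ 2 * (normSq F.im + normSq G.im) +
        (normSq F.im - normSq G.im) ^ 2 :=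
  det_mulLeft_add_mulRight F G
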